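/- arXiv:2101.12473 — 7 statements merged into one kernel-verified Lean document; each statement's English description precedes it below -/
import Mathlib

section
/- The function g(z) = exp(e^{-z} + z) is an entire solution of the differential equation g'' + e^{-z} g' - g = 0. -/
open Complex

private lemma hasDerivAt_g (z : ℂ) :
    HasDerivAt (fun z => Complex.exp (Complex.exp (-z) + z))
      ((1 - Complex.exp (-z)) * Complex.exp (Complex.exp (-z) + z)) z := by
  have h1 : HasDerivAt (fun z : ℂ => Complex.exp (-z) + z) (-Complex.exp (-z) + 1) z := by
    have := ((Complex.hasDerivAt_exp (-z)).comp z ((hasDerivAt_id z).neg))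
    exact (this.add (hasDerivAt_id z)).congr_deriv (by ring)
  have := h1.cexp
  refine this.congr_deriv ?_
  ring

theorem stmt_1 (g : ℂ → ℂ) (hg : g = fun z => Complex.exp (Complex.exp (-z) + z)) :
    Differentiable ℂ g ∧
      ∀ z : ℂ, iteratedDeriv 2 g z + Complex.exp (-z) * deriv g z - g z = 0 := by
  subst hg
  have hd : ∀ z : ℂ, deriv (fun z => Complex.exp (Complex.exp (-z) + z)) z
      = (1 - Complex.exp (-z)) * Complex.exp (Complex.exp (-z) + z) :=
    fun z => (hasDerivAt_g z).deriv
  constructor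
  · exact fun z => (hasDerivAt_g z).differentiableAt
  · intro z
    have h2 : deriv (deriv (fun z => Complex.exp (Complex.exp (-z) + z))) z
        = Complex.exp (-z) * Complex.exp (Complex.exp (-z) + z)
          + (1 - Complex.exp (-z)) * ((1 - Complex.exp (-z)) * Complex.exp (Complex.exp (-z) + z)) := by
      have heq : deriv (fun z => Complex.exp (Complex.exp (-z) + z))
          = fun z => (1 - Complex.exp (-z)) * Complex.exp (Complex.exp (-z) + z) :=
        funext hd
      rw [heq]
      have hc : HasDerivAt (fun z : ℂ => 1 - Complex.exp (-z)) (Complex.exp (-z)) z := by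
        have := ((Complex.hasDerivAt_exp (-z)).comp z ((hasDerivAt_id z).neg))
        exact ((hasDerivAt_const z (1:ℂ)).sub this).congr_deriv (by ring)
      exact (hc.mul (hasDerivAt_g z)).deriv
    rw [iteratedDeriv_succ, iteratedDeriv_one, h2, hd]
    ring
end

section
/- The function f(z) = 1 + 3e^{2z} + √6·i·e^{3z} satisfies f''(z) + (1 - √6·i·e^{-z} + 2e^{-2z}) f'(z) - 12 f(z) = 0 for all z ∈ ℂ. -/
open Complex

theorem stmt_4 (f : ℂ → ℂ)
    (hf : f = fun z => 1 + 3 * Complex.exp (2 * z)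
      + (Real.sqrt 6 : ℂ) * Complex.I * Complex.exp (3 * z)) :
    ∀ z : ℂ, iteratedDeriv 2 f z
      + (1 - (Real.sqrt 6 : ℂ) * Complex.I * Complex.exp (-z) + 2 * Complex.exp (-2 * z)) * deriv f z
      - 12 * f z = 0 := by
  subst hf
  have e2 : ∀ z : ℂ, HasDerivAt (fun z : ℂ => Complex.exp (2 * z)) (Complex.exp (2 * z) * 2) z :=
    fun z => by simpa using ((hasDerivAt_id z).const_mul 2).cexp
  have e3 : ∀ z : ℂ, HasDerivAt (fun z : ℂ => Complex.exp (3 * z)) (Complex.exp (3 * z) * 3) z :=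
    fun z => by simpa using ((hasDerivAt_id z).const_mul 3).cexp
  have h1 : ∀ z : ℂ, HasDerivAt (fun z => 1 + 3 * Complex.exp (2 * z)
      + (Real.sqrt 6 : ℂ) * Complex.I * Complex.exp (3 * z))
      (3 * (Complex.exp (2 * z) * 2) + (Real.sqrt 6 : ℂ) * Complex.I * (Complex.exp (3 * z) * 3)) z := by
    intro z
    exact (((e2 z).const_mul 3).const_add 1).add (((e3 z).const_mul ((Real.sqrt 6 : ℂ) * Complex.I)))
  have hd : deriv (fun z => 1 + 3 * Complex.exp (2 * z)
      + (Real.sqrt 6 : ℂ) * Complex.I * Complex.exp (3 * z))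
      = fun z => 3 * (Complex.exp (2 * z) * 2) + (Real.sqrt 6 : ℂ) * Complex.I * (Complex.exp (3 * z) * 3) :=
    funext fun z => (h1 z).deriv
  have h2 : ∀ z : ℂ, HasDerivAt (fun z => 3 * (Complex.exp (2 * z) * 2)
      + (Real.sqrt 6 : ℂ) * Complex.I * (Complex.exp (3 * z) * 3))
      (3 * (Complex.exp (2 * z) * 2 * 2) + (Real.sqrt 6 : ℂ) * Complex.I * (Complex.exp (3 * z) * 3 * 3)) z := by
    intro z
    exact (((e2 z).mul_const 2).const_mul 3).add (((e3 z).mul_const 3).const_mul ((Real.sqrt 6 : ℂ) * Complex.I))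
  intro z
  rw [iteratedDeriv_succ, iteratedDeriv_one, hd, (h2 z).deriv]
  have hez : Complex.exp z ≠ 0 := Complex.exp_ne_zero z
  simp only [show (-2:ℂ)*z = -(2*z) by ring, Complex.exp_neg,
    show (2:ℂ)*z = ((2:ℕ):ℂ)*z by norm_num, show (3:ℂ)*z = ((3:ℕ):ℂ)*z by norm_num,
    Complex.exp_nat_mul]
  field_simp
  ring_nf
  rw [Complex.I_sq]
  ring_nf
  rw [show ((Real.sqrt 6 : ℝ) : ℂ)^2 = ((Real.sqrt 6 :ℝ)*(Real.sqrt 6:ℝ) : ℝ) by push_cast; ring,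
    Real.mul_self_sqrt (by norm_num)]
  ring_nf
  push_cast
  ring
end

section
/- Let m be a positive integer and define C_j = (1/j!)·∏_{k=0}^{j-1}(m² - k²) for 1 ≤ j ≤ m. Then the function f(z) = 1 + Σ_{j=1}^{m} C_j e^{jz} satisfies f''(z) + e^{-z} f'(z) - m² f(z) = 0 for all z ∈ ℂ, and moreover C_j ≠ 0 for all 1 ≤ j ≤ m. -/
open Complex

theorem stmt_8 (m : ℕ) (hm : 1 ≤ m) (C : ℕ → ℂ)
    (hC : ∀ j, 1 ≤ j → j ≤ m →
      C j = (1 / (j.factorial : ℂ)) * ∏ k ∈ Finset.range j, ((m : ℂ) ^ 2 - (k : ℂ) ^ 2))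
    (f : ℂ → ℂ)
    (hf : f = fun z => 1 + ∑ j ∈ Finset.Icc 1 m, C j * Complex.exp ((j : ℂ) * z)) :
    (∀ z : ℂ, iteratedDeriv 2 f z + Complex.exp (-z) * deriv f z - (m : ℂ) ^ 2 * f z = 0)
      ∧ ∀ j, 1 ≤ j → j ≤ m → C j ≠ 0 := by
  have hfac : ∀ j : ℕ, ((j.factorial : ℂ)) ≠ 0 := fun j =>
    Nat.cast_ne_zero.mpr j.factorial_ne_zero
  -- nonvanishing of C
  have hCne : ∀ j, 1 ≤ j → j ≤ m → C j ≠ 0 := by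
    intro j hj1 hj2
    rw [hC j hj1 hj2]
    apply mul_ne_zero (one_div_ne_zero (hfac j))
    apply Finset.prod_ne_zero_iff.mpr
    intro k hk
    have hk' : k < m := lt_of_lt_of_le (Finset.mem_range.mp hk) hj2
    have : k ^ 2 < m ^ 2 := Nat.pow_lt_pow_left hk' (by norm_num)
    have hne : m ^ 2 ≠ k ^ 2 := Nat.ne_of_gt this
    exact sub_ne_zero.mpr (by exact_mod_cast hne)
  set D : ℕ → ℂ := fun j => if j = 0 then 1 else C j with hD
  have hrec : ∀ j : ℕ, j < m → ((j : ℂ) + 1) * D (j + 1) = ((m : ℂ) ^ 2 - (j : ℂ) ^ 2) * D j := by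
    intro j hj
    rcases Nat.eq_zero_or_pos j with rfl | hj1
    · simp only [hD, Nat.zero_add, if_neg one_ne_zero, if_pos rfl]
      rw [hC 1 le_rfl hm]
      simp [Finset.prod_range_one, Nat.factorial]
    · have hj2 : j + 1 ≤ m := hj
      have e1 : C (j + 1) = (1 / ((j + 1).factorial : ℂ)) *
          ∏ k ∈ Finset.range (j + 1), ((m : ℂ) ^ 2 - (k : ℂ) ^ 2) :=
        hC (j + 1) (by omega) hj2
      have e2 : C j = (1 / (j.factorial : ℂ)) *
          ∏ k ∈ Finset.range j, ((m : ℂ) ^ 2 - (k : ℂ) ^ 2) :=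
        hC j hj1 (by omega)
      have hj0 : j ≠ 0 := by omega
      have hDj : D j = C j := by simp [hD, hj0]
      have hDj1 : D (j + 1) = C (j + 1) := by simp [hD]
      rw [hDj, hDj1, e1, e2, Finset.prod_range_succ, Nat.factorial_succ]
      have h1 : ((1 : ℂ) + (j : ℂ)) ≠ 0 := by
        have h2 : ((1 : ℂ) + (j : ℂ)) = (((j + 1 : ℕ)) : ℂ) := by push_cast; ring
        rw [h2]
        exact Nat.cast_ne_zero.mpr (Nat.succ_ne_zero j)
      push_cast
      field_simp [hfac j, h1]
  -- derivatives
  have hder1 : ∀ x : ℂ, HasDerivAt f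
      (∑ j ∈ Finset.Icc 1 m, C j * (Complex.exp ((j : ℂ) * x) * j)) x := by
    intro x
    rw [hf]
    refine HasDerivAt.const_add 1 ?_
    refine HasDerivAt.fun_sum fun j _ => ?_
    have h := (((hasDerivAt_id x).const_mul ((j : ℕ) : ℂ)).cexp).const_mul (C j)
    simpa using h
  have hf'eq : deriv f = fun x => ∑ j ∈ Finset.Icc 1 m, C j * (Complex.exp ((j : ℂ) * x) * j) :=
    funext fun x => (hder1 x).deriv
  have hder2 : ∀ x : ℂ, HasDerivAt
      (fun y => ∑ j ∈ Finset.Icc 1 m, C j * (Complex.exp ((j : ℂ) * y) * j))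
      (∑ j ∈ Finset.Icc 1 m, C j * (Complex.exp ((j : ℂ) * x) * j * j)) x := by
    intro x
    refine HasDerivAt.fun_sum fun j _ => ?_
    have h := ((((hasDerivAt_id x).const_mul ((j : ℕ) : ℂ)).cexp).mul_const ((j : ℕ) : ℂ)).const_mul (C j)
    simpa using h
  have hf''eq : ∀ x : ℂ, iteratedDeriv 2 f x
      = ∑ j ∈ Finset.Icc 1 m, C j * (Complex.exp ((j : ℂ) * x) * j * j) := by
    intro x
    have h2 : iteratedDeriv 2 f = deriv (deriv f) := by
      rw [iteratedDeriv_succ, iteratedDeriv_one]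
    rw [h2, hf'eq]
    exact (hder2 x).deriv
  refine ⟨fun z => ?_, hCne⟩
  -- converting Icc sums to range sums with D
  have hins : Finset.range (m + 1) = insert 0 (Finset.Icc 1 m) := by
    ext x; simp [Nat.lt_succ_iff]; omega
  have hS : ∀ w : ℕ → ℂ, ∑ j ∈ Finset.Icc 1 m, C j * w j
      = ∑ j ∈ Finset.range (m + 1), D j * w j - w 0 := by
    intro w
    rw [hins, Finset.sum_insert (by simp)]
    have : ∀ j ∈ Finset.Icc 1 m, D j * w j = C j * w j := by
      intro j hj
      have : j ≠ 0 := by have := (Finset.mem_Icc.mp hj).1; omega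
      simp [hD, this]
    rw [Finset.sum_congr rfl this]
    simp [hD]
  -- key shifted-sum identity
  have hkey : ∑ j ∈ Finset.range (m + 1), (j : ℂ) * D j * Complex.exp ((j : ℂ) * z - z)
      = ∑ j ∈ Finset.range (m + 1), ((m : ℂ) ^ 2 - (j : ℂ) ^ 2) * D j
          * Complex.exp ((j : ℂ) * z) := by
    rw [Finset.sum_range_succ' _ m, Finset.sum_range_succ]
    simp only [Nat.cast_zero, zero_mul, mul_zero, zero_add, zero_sub]
    rw [show ((m : ℂ) ^ 2 - (m : ℂ) ^ 2) = 0 by ring]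
    simp only [zero_mul, add_zero, mul_zero]
    refine Finset.sum_congr rfl fun j hj => ?_
    have hrec' := hrec j (Finset.mem_range.mp hj)
    have harg : ((j + 1 : ℕ) : ℂ) * z - z = (j : ℂ) * z := by push_cast; ring
    rw [harg]
    push_cast
    linear_combination Complex.exp ((j : ℂ) * z) * hrec'
  rw [hf''eq z, hf'eq, hf]
  simp only
  rw [hS (fun j => Complex.exp ((j : ℂ) * z) * j * j),
    hS (fun j => Complex.exp ((j : ℂ) * z) * j),
    hS (fun j => Complex.exp ((j : ℂ) * z))]
  simp only [Nat.cast_zero, mul_zero, zero_mul, sub_zero, Complex.exp_zero, zero_mul]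
  have hexp : ∀ j : ℕ, Complex.exp (-z) * Complex.exp ((j : ℂ) * z)
      = Complex.exp ((j : ℂ) * z - z) := by
    intro j; rw [← Complex.exp_add]; ring_nf
  rw [Finset.mul_sum]
  have hstep : ∑ j ∈ Finset.range (m + 1),
      Complex.exp (-z) * (D j * (Complex.exp ((j : ℂ) * z) * j))
      = ∑ j ∈ Finset.range (m + 1), (j : ℂ) * D j * Complex.exp ((j : ℂ) * z - z) := by
    refine Finset.sum_congr rfl fun j _ => ?_
    rw [← hexp j]; ring
  rw [hstep, hkey]
  rw [← Finset.sum_add_distrib]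
  have hone : (1 : ℂ) + (∑ j ∈ Finset.range (m + 1), D j * Complex.exp ((j : ℂ) * z) - 1)
      = ∑ j ∈ Finset.range (m + 1), D j * Complex.exp ((j : ℂ) * z) := by ring
  rw [hone, Finset.mul_sum, ← Finset.sum_sub_distrib]
  apply Finset.sum_eq_zero
  intro j _
  ring
end

section
/- Let m ≥ 1 and let C_1, …, C_m ∈ ℂ. If f(z) = 1 + Σ_{j=1}^m C_j e^{jz} satisfies f'' + e^{-z} f' - m² f = 0 on ℂ, then C_1 = m² and (m² - j²)·C_j = (j+1)·C_{j+1} for 1 ≤ j ≤ m - 1. -/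
open Complex

/-- A polynomial-style identity: if `∑ a k * w ^ k = 0` for all nonzero `w`,
then all coefficients vanish. -/
lemma coeffs_eq_zero_of_sum_pow (N : ℕ) (a : ℕ → ℂ)
    (h : ∀ w : ℂ, w ≠ 0 → ∑ k ∈ Finset.range N, a k * w ^ k = 0) :
    ∀ k, k < N → a k = 0 := by
  intro k hk
  set P : Polynomial ℂ := ∑ j ∈ Finset.range N, Polynomial.C (a j) * Polynomial.X ^ j with hPdef
  have hP : P = 0 := by
    apply Polynomial.eq_zero_of_infinite_isRoot
    apply Set.Infinite.mono (s := {x : ℂ | x ≠ 0})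
    · intro w hw
      simpa [P, Polynomial.IsRoot, Polynomial.eval_finset_sum] using h w hw
    · exact (Set.finite_singleton (0 : ℂ)).infinite_compl
  have := congrArg (fun p => Polynomial.coeff p k) hP
  simpa [P, Polynomial.finset_sum_coeff, Polynomial.coeff_C_mul, Polynomial.coeff_X_pow,
    hk] using this

theorem stmt_9 (m : ℕ) (hm : 1 ≤ m) (C : ℕ → ℂ) (f : ℂ → ℂ)
    (hf : f = fun z => 1 + ∑ j ∈ Finset.Icc 1 m, C j * Complex.exp ((j : ℂ) * z))
    (hode : ∀ z : ℂ,
      iteratedDeriv 2 f z + Complex.exp (-z) * deriv f z - (m : ℂ) ^ 2 * f z = 0) :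
    C 1 = (m : ℂ) ^ 2 ∧
      ∀ j, 1 ≤ j → j ≤ m - 1 →
        ((m : ℂ) ^ 2 - (j : ℂ) ^ 2) * C j = ((j : ℂ) + 1) * C (j + 1) := by
  -- first derivative
  have hfd : ∀ z, HasDerivAt f (∑ j ∈ Finset.Icc 1 m, (j : ℂ) * C j * Complex.exp ((j : ℂ) * z)) z := by
    intro z
    rw [hf]
    have : HasDerivAt (fun z => ∑ j ∈ Finset.Icc 1 m, C j * Complex.exp ((j : ℂ) * z))
        (∑ j ∈ Finset.Icc 1 m, (j : ℂ) * C j * Complex.exp ((j : ℂ) * z)) z := by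
      apply HasDerivAt.fun_sum
      intro j _
      have h1 : HasDerivAt (fun z : ℂ => (j : ℂ) * z) (j : ℂ) z := by
        simpa using (hasDerivAt_id z).const_mul (j : ℂ)
      have := (h1.cexp).const_mul (C j)
      refine this.congr_deriv ?_
      ring
    simpa using this.const_add 1
  have hdf : deriv f = fun z => ∑ j ∈ Finset.Icc 1 m, (j : ℂ) * C j * Complex.exp ((j : ℂ) * z) :=
    funext fun z => (hfd z).deriv
  -- second derivative
  have hgd : ∀ z, HasDerivAt (fun z => ∑ j ∈ Finset.Icc 1 m, (j : ℂ) * C j * Complex.exp ((j : ℂ) * z))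
      (∑ j ∈ Finset.Icc 1 m, (j : ℂ) ^ 2 * C j * Complex.exp ((j : ℂ) * z)) z := by
    intro z
    apply HasDerivAt.fun_sum
    intro j _
    have h1 : HasDerivAt (fun z : ℂ => (j : ℂ) * z) (j : ℂ) z := by
      simpa using (hasDerivAt_id z).const_mul (j : ℂ)
    have := (h1.cexp).const_mul ((j : ℂ) * C j)
    refine this.congr_deriv ?_
    ring
  have h2 : ∀ z, iteratedDeriv 2 f z = ∑ j ∈ Finset.Icc 1 m, (j : ℂ) ^ 2 * C j * Complex.exp ((j : ℂ) * z) := by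
    intro z
    rw [show (2 : ℕ) = 1 + 1 from rfl, iteratedDeriv_succ, iteratedDeriv_one, hdf]
    exact (hgd z).deriv
  -- the coefficient function
  set b : ℕ → ℂ := fun k =>
    (if k ∈ Finset.Icc 1 m then (k : ℂ) * C k else 0) +
    (if k ∈ Finset.Icc 2 (m + 1) then (((k - 1 : ℕ) : ℂ) ^ 2 - (m : ℂ) ^ 2) * C (k - 1) else 0) -
    (if k = 1 then (m : ℂ) ^ 2 else 0) with hbdef
  have claim : ∀ w : ℂ, w ≠ 0 → ∑ k ∈ Finset.range (m + 2), b k * w ^ k = 0 := by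
    intro w hw
    have e1 := hode (Complex.log w)
    rw [h2, hdf, hf] at e1
    simp only [Complex.exp_neg, Complex.exp_nat_mul, Complex.exp_log hw] at e1
    -- e1 : ∑ j² C_j w^j + w⁻¹ * ∑ j C_j w^j - m² * (1 + ∑ C_j w^j) = 0
    field_simp at e1
    have hsplit : ∑ j ∈ Finset.Icc 1 m, ((j : ℂ) ^ 2 - (m : ℂ) ^ 2) * C j * w ^ (j + 1)
        = (∑ j ∈ Finset.Icc 1 m, (j : ℂ) ^ 2 * C j * w ^ j) * w -
          (m : ℂ) ^ 2 * ((∑ j ∈ Finset.Icc 1 m, C j * w ^ j) * w) := by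
      rw [Finset.sum_mul, Finset.sum_mul, Finset.mul_sum, ← Finset.sum_sub_distrib]
      exact Finset.sum_congr rfl fun j _ => by ring
    have e2 : ∑ j ∈ Finset.Icc 1 m, ((j : ℂ) ^ 2 - (m : ℂ) ^ 2) * C j * w ^ (j + 1) +
        ∑ j ∈ Finset.Icc 1 m, (j : ℂ) * C j * w ^ j - (m : ℂ) ^ 2 * w = 0 := by
      rw [hsplit]
      linear_combination e1
    -- identify the range-sum with the Icc sums
    have hsub1 : Finset.Icc 1 m ⊆ Finset.range (m + 2) := by
      intro k hk; simp only [Finset.mem_Icc, Finset.mem_range] at *; omega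
    have hsub2 : Finset.Icc 2 (m + 1) ⊆ Finset.range (m + 2) := by
      intro k hk; simp only [Finset.mem_Icc, Finset.mem_range] at *; omega
    have S1 : ∑ k ∈ Finset.range (m + 2), (if k ∈ Finset.Icc 1 m then (k : ℂ) * C k else 0) * w ^ k
        = ∑ j ∈ Finset.Icc 1 m, (j : ℂ) * C j * w ^ j := by
      rw [Finset.sum_congr rfl fun k _ => by rw [ite_mul, zero_mul], Finset.sum_ite_mem,
        Finset.inter_eq_right.mpr hsub1]
    have S2 : ∑ k ∈ Finset.range (m + 2),
        (if k ∈ Finset.Icc 2 (m + 1) then (((k - 1 : ℕ) : ℂ) ^ 2 - (m : ℂ) ^ 2) * C (k - 1) else 0) * w ^ k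
        = ∑ j ∈ Finset.Icc 1 m, ((j : ℂ) ^ 2 - (m : ℂ) ^ 2) * C j * w ^ (j + 1) := by
      rw [Finset.sum_congr rfl fun k _ => by rw [ite_mul, zero_mul], Finset.sum_ite_mem,
        Finset.inter_eq_right.mpr hsub2]
      rw [show Finset.Icc 2 (m + 1) = (Finset.Icc 1 m).map (addRightEmbedding 1) from
        (Finset.map_add_right_Icc 1 m 1).symm, Finset.sum_map]
      exact Finset.sum_congr rfl fun j _ => by simp [addRightEmbedding]
    have S3 : ∑ k ∈ Finset.range (m + 2), (if k = 1 then (m : ℂ) ^ 2 else 0) * w ^ k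
        = (m : ℂ) ^ 2 * w := by
      rw [Finset.sum_congr rfl fun k _ => by rw [ite_mul, zero_mul]]
      rw [Finset.sum_ite_eq' (Finset.range (m + 2)) 1 fun k => (m : ℂ) ^ 2 * w ^ k]
      simp
    calc ∑ k ∈ Finset.range (m + 2), b k * w ^ k
        = ∑ k ∈ Finset.range (m + 2), ((if k ∈ Finset.Icc 1 m then (k : ℂ) * C k else 0) * w ^ k +
            (if k ∈ Finset.Icc 2 (m + 1) then (((k - 1 : ℕ) : ℂ) ^ 2 - (m : ℂ) ^ 2) * C (k - 1) else 0) * w ^ k -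
            (if k = 1 then (m : ℂ) ^ 2 else 0) * w ^ k) := by
          exact Finset.sum_congr rfl fun k _ => by rw [hbdef]; ring
      _ = 0 := by
          rw [Finset.sum_sub_distrib, Finset.sum_add_distrib, S1, S2, S3]
          linear_combination e2
  have hb := coeffs_eq_zero_of_sum_pow (m + 2) b claim
  constructor
  · have h1 := hb 1 (by omega)
    rw [hbdef] at h1
    simp only [Finset.mem_Icc] at h1
    have hc1 : (1 : ℕ) ≤ 1 ∧ 1 ≤ m := ⟨le_refl 1, hm⟩
    simp only [if_pos hc1, if_neg (by omega : ¬((2 : ℕ) ≤ 1 ∧ 1 ≤ m + 1)), if_pos rfl] at h1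
    push_cast at h1
    linear_combination h1
  · intro j hj1 hj2
    have hjm : j + 1 ≤ m := by omega
    have h1 := hb (j + 1) (by omega)
    rw [hbdef] at h1
    simp only [Finset.mem_Icc] at h1
    simp only [if_pos (by omega : (1 : ℕ) ≤ j + 1 ∧ j + 1 ≤ m),
      if_pos (by omega : (2 : ℕ) ≤ j + 1 ∧ j + 1 ≤ m + 1),
      if_neg (by omega : ¬(j + 1 = 1)), Nat.add_sub_cancel] at h1
    push_cast at h1
    linear_combination -h1
end

section
/- Let q ≥ 1 be a natural number and f(z) = e^{z^q} + 1. Then (1 + e^{-z^q})·f'(z) = q·z^{q-1}·f(z) for all z ∈ ℂ. Moreover, for each j ∈ ℕ there exist polynomials P_{j,0}, …, P_{j,j} ∈ ℂ[X] with (1 + e^{-z^q})·f^{(j+1)}(z) = Σ_{k=0}^{j} P_{j,k}(z)·f^{(k)}(z) for all z, satisfying the recursion P_{0,0}(z) = q z^{q-1}, P_{j+1,j+1} = P_{j,j} - q z^{q-1}, P_{j+1,k} = P_{j,k}' + q z^{q-1} P_{j,k} + P_{j,k-1} for 1 ≤ k ≤ j, and P_{j+1,0} = P_{j,0}' + q z^{q-1}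 P_{j,0}. -/
open Complex Polynomial

noncomputable def PmAux (q : ℕ) : ℕ → ℕ → Polynomial ℂ
  | 0, k => if k = 0 then C (q : ℂ) * X ^ (q - 1) else 0
  | j + 1, k =>
      if k = j + 1 then PmAux q j j - C (q : ℂ) * X ^ (q - 1)
      else if k = 0 then derivative (PmAux q j 0) + C (q : ℂ) * X ^ (q - 1) * PmAux q j 0
      else derivative (PmAux q j k) + C (q : ℂ) * X ^ (q - 1) * PmAux q j k + PmAux q j (k - 1)

theorem stmt_17 (q : ℕ) (hq : 1 ≤ q) (f : ℂ → ℂ)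
    (hf : f = fun z => Complex.exp (z ^ q) + 1) :
    (∀ z : ℂ, (1 + Complex.exp (-z ^ q)) * deriv f z = (q : ℂ) * z ^ (q - 1) * f z) ∧
    ∃ P : ℕ → ℕ → Polynomial ℂ,
      P 0 0 = Polynomial.C (q : ℂ) * Polynomial.X ^ (q - 1) ∧
      (∀ j, P (j + 1) (j + 1) = P j j - Polynomial.C (q : ℂ) * Polynomial.X ^ (q - 1)) ∧
      (∀ j k, 1 ≤ k → k ≤ j →
        P (j + 1) k = Polynomial.derivative (P j k)
          + Polynomial.C (q : ℂ) * Polynomial.X ^ (q - 1) * P j k + P j (k - 1)) ∧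
      (∀ j, P (j + 1) 0 = Polynomial.derivative (P j 0)
          + Polynomial.C (q : ℂ) * Polynomial.X ^ (q - 1) * P j 0) ∧
      (∀ j, ∀ z : ℂ, (1 + Complex.exp (-z ^ q)) * iteratedDeriv (j + 1) f z
          = ∑ k ∈ Finset.range (j + 1), (P j k).eval z * iteratedDeriv k f z) := by
  -- basic differentiability facts
  have hfd : Differentiable ℂ f := by
    rw [hf]
    exact (Complex.differentiable_exp.comp (differentiable_pow q)).add_const 1
  have hFd : ∀ k, Differentiable ℂ (iteratedDeriv k f) := by
    intro k
    rw [iteratedDeriv_eq_iterate]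
    exact (ContDiff.iterate_deriv k hfd.contDiff).differentiable (by simp)
  have hF' : ∀ (k : ℕ) (z : ℂ),
      HasDerivAt (iteratedDeriv k f) (iteratedDeriv (k + 1) f z) z := by
    intro k z
    rw [iteratedDeriv_succ]
    exact ((hFd k) z).hasDerivAt
  have hpow : ∀ z : ℂ, HasDerivAt (fun z : ℂ => z ^ q) ((q : ℂ) * z ^ (q - 1)) z := by
    intro z
    simpa using hasDerivAt_pow q z
  have hg : ∀ z : ℂ, HasDerivAt (fun z : ℂ => Complex.exp (-z ^ q))
      (-((q : ℂ) * z ^ (q - 1)) * Complex.exp (-z ^ q)) z := by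
    intro z
    have h1 : HasDerivAt (fun z : ℂ => -z ^ q) (-((q : ℂ) * z ^ (q - 1))) z := (hpow z).neg
    simpa [mul_comm] using h1.cexp
  have hfder : ∀ z : ℂ, HasDerivAt f (Complex.exp (z ^ q) * ((q : ℂ) * z ^ (q - 1))) z := by
    intro z
    rw [hf]
    exact ((hpow z).cexp).add_const 1
  have hexp : ∀ z : ℂ, Complex.exp (-z ^ q) * Complex.exp (z ^ q) = 1 := by
    intro z
    rw [← Complex.exp_add]
    simp
  -- first part
  have first : ∀ z : ℂ, (1 + Complex.exp (-z ^ q)) * deriv f z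
      = (q : ℂ) * z ^ (q - 1) * f z := by
    intro z
    have hfz : f z = Complex.exp (z ^ q) + 1 := by rw [hf]
    rw [(hfder z).deriv, hfz]
    linear_combination ((q : ℂ) * z ^ (q - 1)) * hexp z
  -- main inductive statement
  have main : ∀ j, ∀ z : ℂ, (1 + Complex.exp (-z ^ q)) * iteratedDeriv (j + 1) f z
      = ∑ k ∈ Finset.range (j + 1), (PmAux q j k).eval z * iteratedDeriv k f z := by
    intro j
    induction j with
    | zero =>
      intro z
      simpa [PmAux, iteratedDeriv_one, Finset.sum_range_one] using first z
    | succ j ih =>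
      intro z
      -- unfolding lemmas for PmAux (j+1)
      have e1 : PmAux q (j + 1) (j + 1) = PmAux q j j - C (q : ℂ) * X ^ (q - 1) := by
        simp [PmAux]
      have e2 : PmAux q (j + 1) 0
          = derivative (PmAux q j 0) + C (q : ℂ) * X ^ (q - 1) * PmAux q j 0 := by
        simp [PmAux]
      have e3 : ∀ i, i < j → PmAux q (j + 1) (i + 1)
          = derivative (PmAux q j (i + 1)) + C (q : ℂ) * X ^ (q - 1) * PmAux q j (i + 1)
            + PmAux q j i := by
        intro i hi
        have h1 : ¬ (i + 1 = j + 1) := by omega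
        simp [PmAux, h1, show i ≠ j by omega]
      -- derivative of both sides of the induction hypothesis
      have hEq : (fun z : ℂ => (1 + Complex.exp (-z ^ q)) * iteratedDeriv (j + 1) f z)
          = fun z : ℂ => ∑ k ∈ Finset.range (j + 1),
              (PmAux q j k).eval z * iteratedDeriv k f z := funext fun z => ih z
      have hL : HasDerivAt (fun z : ℂ => (1 + Complex.exp (-z ^ q)) * iteratedDeriv (j + 1) f z)
          ((0 + -((q : ℂ) * z ^ (q - 1)) * Complex.exp (-z ^ q)) * iteratedDeriv (j + 1) f z
            + (1 + Complex.exp (-z ^ q)) * iteratedDeriv (j + 1 + 1) f z) z :=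
        ((hasDerivAt_const z (1 : ℂ)).add (hg z)).mul (hF' (j + 1) z)
      have hL2 : HasDerivAt (fun z : ℂ => ∑ k ∈ Finset.range (j + 1),
              (PmAux q j k).eval z * iteratedDeriv k f z)
          ((0 + -((q : ℂ) * z ^ (q - 1)) * Complex.exp (-z ^ q)) * iteratedDeriv (j + 1) f z
            + (1 + Complex.exp (-z ^ q)) * iteratedDeriv (j + 1 + 1) f z) z := hEq ▸ hL
      have hR : HasDerivAt (fun z : ℂ => ∑ k ∈ Finset.range (j + 1),
              (PmAux q j k).eval z * iteratedDeriv k f z)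
          (∑ k ∈ Finset.range (j + 1),
            (Polynomial.eval z (derivative (PmAux q j k)) * iteratedDeriv k f z
              + Polynomial.eval z (PmAux q j k) * iteratedDeriv (k + 1) f z)) z := by
        refine HasDerivAt.fun_sum fun k _ => ?_
        exact ((PmAux q j k).hasDerivAt z).mul (hF' k z)
      have hkey := hL2.unique hR
      -- rearrange the target sum
      have claim : ∑ k ∈ Finset.range (j + 1 + 1),
            (PmAux q (j + 1) k).eval z * iteratedDeriv k f z
          = ∑ k ∈ Finset.range (j + 1),
              (Polynomial.eval z (derivative (PmAux q j k)) * iteratedDeriv k f z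
                + Polynomial.eval z (PmAux q j k) * iteratedDeriv (k + 1) f z)
            + (q : ℂ) * z ^ (q - 1) * ∑ k ∈ Finset.range (j + 1),
                (PmAux q j k).eval z * iteratedDeriv k f z
            - (q : ℂ) * z ^ (q - 1) * iteratedDeriv (j + 1) f z := by
        rw [Finset.sum_range_succ'
          (fun k => (PmAux q (j + 1) k).eval z * iteratedDeriv k f z) (j + 1)]
        rw [Finset.sum_range_succ
          (fun i => (PmAux q (j + 1) (i + 1)).eval z * iteratedDeriv (i + 1) f z) j]
        rw [e1, e2]
        have hinner : ∑ i ∈ Finset.range j,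
              (PmAux q (j + 1) (i + 1)).eval z * iteratedDeriv (i + 1) f z
            = ∑ i ∈ Finset.range j,
                (Polynomial.eval z (derivative (PmAux q j (i + 1))) * iteratedDeriv (i + 1) f z
                  + (q : ℂ) * z ^ (q - 1)
                    * (Polynomial.eval z (PmAux q j (i + 1)) * iteratedDeriv (i + 1) f z)
                  + Polynomial.eval z (PmAux q j i) * iteratedDeriv (i + 1) f z) := by
          refine Finset.sum_congr rfl fun i hi => ?_
          rw [e3 i (Finset.mem_range.mp hi)]
          simp only [eval_add, eval_mul, eval_C, eval_pow, eval_X]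
          ring
        rw [hinner]
        rw [Finset.sum_add_distrib, Finset.sum_add_distrib]
        rw [Finset.sum_add_distrib]
        rw [Finset.mul_sum]
        rw [Finset.sum_range_succ'
          (fun k => Polynomial.eval z (derivative (PmAux q j k)) * iteratedDeriv k f z) j]
        rw [Finset.sum_range_succ
          (fun k => Polynomial.eval z (PmAux q j k) * iteratedDeriv (k + 1) f z) j]
        rw [Finset.sum_range_succ'
          (fun k => (q : ℂ) * z ^ (q - 1)
            * ((PmAux q j k).eval z * iteratedDeriv k f z)) j]
        simp only [eval_add, eval_mul, eval_sub, eval_C, eval_pow, eval_X]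
        ring
      rw [claim]
      linear_combination hkey + ((q : ℂ) * z ^ (q - 1)) * ih z
  refine ⟨first, PmAux q, ?_, ?_, ?_, ?_, main⟩
  · simp [PmAux]
  · intro j; simp [PmAux]
  · intro j k h1 h2
    have hk1 : ¬ (k = j + 1) := by omega
    have hk0 : ¬ (k = 0) := by omega
    simp [PmAux, hk1, hk0]
  · intro j; simp [PmAux]
end

section
/- Let q ≥ 1 and f(z) = e^{z^q} + 1. For 1 ≤ ℓ ≤ q define Q_ℓ(z) = -binom(q, ℓ-1)·(d/dz)^{q-ℓ+1}(e^{-z^q})·e^{z^q}. Then each Q_ℓ is a polynomial function of z, and f^{(q+1)}(z) = Σ_{ℓ=1}^{q} Q_ℓ(z)·f^{(ℓ)}(z) for all z ∈ ℂ. -/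
open Complex Polynomial

private lemma diff_iter {g : ℂ → ℂ} (hg : ContDiff ℂ ⊤ g) (k : ℕ) :
    Differentiable ℂ (iteratedDeriv k g) :=
  hg.differentiable_iteratedDeriv k (by exact_mod_cast lt_top_iff_ne_top.2 (by simp))

private lemma hasDerivAt_iter {g : ℂ → ℂ} (hg : ContDiff ℂ ⊤ g) (k : ℕ) (z : ℂ) :
    HasDerivAt (iteratedDeriv k g) (iteratedDeriv (k + 1) g z) z := by
  rw [iteratedDeriv_succ]
  exact ((diff_iter hg k) z).hasDerivAt

private lemma leibniz_iter {g h : ℂ → ℂ} (hg : ContDiff ℂ ⊤ g) (hh : ContDiff ℂ ⊤ h) :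
    ∀ (n : ℕ) (z : ℂ), iteratedDeriv n (fun w => g w * h w) z
      = ∑ k ∈ Finset.range (n + 1),
          (n.choose k : ℂ) * iteratedDeriv k g z * iteratedDeriv (n - k) h z := by
  intro n
  induction n with
  | zero => intro z; simp
  | succ n ih =>
    intro z
    have hfun : iteratedDeriv n (fun w => g w * h w)
        = fun z => ∑ k ∈ Finset.range (n + 1),
            (n.choose k : ℂ) * iteratedDeriv k g z * iteratedDeriv (n - k) h z := funext ih
    rw [iteratedDeriv_succ, hfun]
    have hder : HasDerivAt (fun z => ∑ k ∈ Finset.range (n + 1),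
            (n.choose k : ℂ) * iteratedDeriv k g z * iteratedDeriv (n - k) h z)
        (∑ k ∈ Finset.range (n + 1),
          ((n.choose k : ℂ) * iteratedDeriv (k + 1) g z * iteratedDeriv (n - k) h z
            + (n.choose k : ℂ) * iteratedDeriv k g z * iteratedDeriv (n - k + 1) h z)) z := by
      refine HasDerivAt.fun_sum fun k _ => ?_
      have := (((hasDerivAt_iter hg k z).const_mul ((n.choose k : ℂ))).fun_mul
        (hasDerivAt_iter hh (n - k) z))
      convert this using 1
    rw [hder.deriv, Finset.sum_add_distrib]
    -- now combinatorial identity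
    rw [Finset.sum_range_succ' (fun k => ((n+1).choose k : ℂ) * iteratedDeriv k g z * iteratedDeriv (n + 1 - k) h z) (n+1)]
    have e1 : ∀ i ∈ Finset.range (n+1),
        (((n+1).choose (i+1) : ℂ)) * iteratedDeriv (i+1) g z * iteratedDeriv (n + 1 - (i+1)) h z
        = (n.choose i : ℂ) * iteratedDeriv (i+1) g z * iteratedDeriv (n - i) h z
          + (n.choose (i+1) : ℂ) * iteratedDeriv (i+1) g z * iteratedDeriv (n - i) h z := by
      intro i _
      have : (n + 1 - (i+1)) = n - i := by omega
      rw [this, Nat.choose_succ_succ]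
      push_cast
      ring
    rw [Finset.sum_congr rfl e1, Finset.sum_add_distrib]
    have e2 : ∑ k ∈ Finset.range (n + 1),
        (n.choose k : ℂ) * iteratedDeriv k g z * iteratedDeriv (n - k + 1) h z
        = ∑ i ∈ Finset.range (n + 1),
            (n.choose (i+1) : ℂ) * iteratedDeriv (i+1) g z * iteratedDeriv (n - i) h z
          + ((n+1).choose 0 : ℂ) * iteratedDeriv 0 g z * iteratedDeriv (n + 1 - 0) h z := by
      rw [Finset.sum_range_succ' (fun k => (n.choose k : ℂ) * iteratedDeriv k g z * iteratedDeriv (n - k + 1) h z) n]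
      rw [Finset.sum_range_succ (fun i => (n.choose (i+1) : ℂ) * iteratedDeriv (i+1) g z * iteratedDeriv (n - i) h z) n]
      have e3 : ∀ i ∈ Finset.range n,
          (n.choose (i+1) : ℂ) * iteratedDeriv (i+1) g z * iteratedDeriv (n - (i+1) + 1) h z
          = (n.choose (i+1) : ℂ) * iteratedDeriv (i+1) g z * iteratedDeriv (n - i) h z := by
        intro i hi
        simp only [Finset.mem_range] at hi
        congr 2
        omega
      rw [Finset.sum_congr rfl e3]
      simp [Nat.choose_succ_self]
    rw [e2]
    ring

private lemma poly_iter (p : Polynomial ℂ) (n : ℕ) :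
    iteratedDeriv n (fun z : ℂ => p.eval z) = fun z => (Polynomial.derivative^[n] p).eval z := by
  induction n with
  | zero => simp
  | succ n ih =>
    rw [iteratedDeriv_succ, ih, Function.iterate_succ_apply']
    funext z
    simp [Polynomial.deriv]

private lemma exp_neg_iter (q n : ℕ) :
    ∃ p : Polynomial ℂ, ∀ z : ℂ,
      iteratedDeriv n (fun w : ℂ => Complex.exp (-w ^ q)) z = p.eval z * Complex.exp (-z ^ q) := by
  induction n with
  | zero => exact ⟨1, by simp⟩
  | succ n ih =>
    obtain ⟨p, hp⟩ := ih
    refine ⟨Polynomial.derivative p + p * (Polynomial.C (-(q : ℂ)) * Polynomial.X ^ (q - 1)),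
      fun z => ?_⟩
    rw [iteratedDeriv_succ, funext hp]
    have h1 : HasDerivAt (fun z : ℂ => Complex.exp (-z ^ q))
        (Complex.exp (-z ^ q) * -((q : ℂ) * z ^ (q - 1))) z :=
      ((hasDerivAt_pow q z).neg).cexp
    have h2 : HasDerivAt (fun z : ℂ => p.eval z * Complex.exp (-z ^ q))
        (p.derivative.eval z * Complex.exp (-z ^ q)
          + p.eval z * (Complex.exp (-z ^ q) * -((q : ℂ) * z ^ (q - 1)))) z :=
      (Polynomial.hasDerivAt p z).mul h1
    rw [h2.deriv]
    simp only [Polynomial.eval_add, Polynomial.eval_mul, Polynomial.eval_C, Polynomial.eval_X,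
      Polynomial.eval_pow]
    ring

private lemma contDiff_expneg (q : ℕ) : ContDiff ℂ ⊤ (fun w : ℂ => Complex.exp (-w ^ q)) :=
  Complex.contDiff_exp.comp ((contDiff_id.pow q).neg)

theorem stmt_18 (q : ℕ) (hq : 1 ≤ q) (f : ℂ → ℂ)
    (hf : f = fun z => Complex.exp (z ^ q) + 1) (Q : ℕ → ℂ → ℂ)
    (hQ : ∀ ℓ, ∀ z : ℂ, Q ℓ z = -(q.choose (ℓ - 1) : ℂ)
      * iteratedDeriv (q - ℓ + 1) (fun w => Complex.exp (-w ^ q)) z * Complex.exp (z ^ q)) :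
    (∀ ℓ, 1 ≤ ℓ → ℓ ≤ q → ∃ p : Polynomial ℂ, ∀ z : ℂ, Q ℓ z = p.eval z) ∧
    ∀ z : ℂ, iteratedDeriv (q + 1) f z
      = ∑ ℓ ∈ Finset.Icc 1 q, Q ℓ z * iteratedDeriv ℓ f z := by
  have hexp : ∀ z : ℂ, Complex.exp (-z ^ q) * Complex.exp (z ^ q) = 1 := by
    intro z
    rw [← Complex.exp_add, neg_add_cancel, Complex.exp_zero]
  constructor
  · intro ℓ _ _
    obtain ⟨p, hp⟩ := exp_neg_iter q (q - ℓ + 1)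
    refine ⟨Polynomial.C (-(q.choose (ℓ - 1) : ℂ)) * p, fun z => ?_⟩
    rw [hQ, hp]
    simp only [Polynomial.eval_mul, Polynomial.eval_C]
    calc -(q.choose (ℓ - 1) : ℂ) * (p.eval z * Complex.exp (-z ^ q)) * Complex.exp (z ^ q)
        = -(q.choose (ℓ - 1) : ℂ) * p.eval z
            * (Complex.exp (-z ^ q) * Complex.exp (z ^ q)) := by ring
      _ = -(q.choose (ℓ - 1) : ℂ) * p.eval z := by rw [hexp]; ring
  · intro z
    -- derivative of f
    have hdf : deriv f = fun z : ℂ => Complex.exp (z ^ q) * ((q : ℂ) * z ^ (q - 1)) := by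
      funext w
      have : HasDerivAt f (Complex.exp (w ^ q) * ((q : ℂ) * w ^ (q - 1))) w := by
        rw [hf]
        exact ((hasDerivAt_pow q w).cexp).add_const 1
      exact this.deriv
    have hcdf : ContDiff ℂ ⊤ (deriv f) := by
      rw [hdf]
      exact (Complex.contDiff_exp.comp (contDiff_id.pow q)).mul
        (contDiff_const.mul (contDiff_id.pow (q - 1)))
    -- the key identity: f' * E = q z^{q-1}
    have hkey : (fun w : ℂ => deriv f w * Complex.exp (-w ^ q))
        = fun w : ℂ => ((Polynomial.C (q : ℂ)) * Polynomial.X ^ (q - 1)).eval w := by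
      funext w
      rw [hdf]
      simp only [Polynomial.eval_mul, Polynomial.eval_C, Polynomial.eval_pow, Polynomial.eval_X]
      calc Complex.exp (w ^ q) * ((q : ℂ) * w ^ (q - 1)) * Complex.exp (-w ^ q)
          = (Complex.exp (-w ^ q) * Complex.exp (w ^ q)) * ((q : ℂ) * w ^ (q - 1)) := by ring
        _ = (q : ℂ) * w ^ (q - 1) := by rw [hexp]; ring
    have hzero : iteratedDeriv q (fun w : ℂ => deriv f w * Complex.exp (-w ^ q)) z = 0 := by
      rw [hkey, poly_iter]
      rw [Polynomial.iterate_derivative_eq_zero]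
      · simp
      · calc ((Polynomial.C (q : ℂ)) * Polynomial.X ^ (q - 1)).natDegree
              ≤ (Polynomial.X ^ (q - 1) : Polynomial ℂ).natDegree :=
              Polynomial.natDegree_C_mul_le _ _
          _ = q - 1 := Polynomial.natDegree_X_pow _
          _ < q := by omega
    have hleib := leibniz_iter hcdf (contDiff_expneg q) q z
    rw [hzero] at hleib
    rw [Finset.sum_range_succ] at hleib
    simp only [Nat.choose_self, Nat.cast_one, one_mul, Nat.sub_self, iteratedDeriv_zero] at hleib
    have hstep : ∀ k : ℕ, iteratedDeriv k (deriv f) z = iteratedDeriv (k + 1) f z := by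
      intro k
      rw [iteratedDeriv_succ']
    have hmain : iteratedDeriv (q + 1) f z * Complex.exp (-z ^ q)
        = -∑ k ∈ Finset.range q, (q.choose k : ℂ) * iteratedDeriv (k + 1) f z
            * iteratedDeriv (q - k) (fun w : ℂ => Complex.exp (-w ^ q)) z := by
      simp only [hstep] at hleib
      linear_combination -hleib
    have hEq : iteratedDeriv (q + 1) f z
        = (-∑ k ∈ Finset.range q, (q.choose k : ℂ) * iteratedDeriv (k + 1) f z
            * iteratedDeriv (q - k) (fun w : ℂ => Complex.exp (-w ^ q)) z)
          * Complex.exp (z ^ q) := by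
      rw [← hmain]
      calc iteratedDeriv (q + 1) f z
          = iteratedDeriv (q + 1) f z * (Complex.exp (-z ^ q) * Complex.exp (z ^ q)) := by
            rw [hexp z]; ring
        _ = iteratedDeriv (q + 1) f z * Complex.exp (-z ^ q) * Complex.exp (z ^ q) := by ring
    have hterm : ∀ i ∈ Finset.range (q + 1 - 1),
        Q (1 + i) z * iteratedDeriv (1 + i) f z
        = -((q.choose i : ℂ) * iteratedDeriv (i + 1) f z
            * iteratedDeriv (q - i) (fun w : ℂ => Complex.exp (-w ^ q)) z
            * Complex.exp (z ^ q)) := by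
      intro i hi
      simp only [Finset.mem_range] at hi
      rw [hQ]
      have h1 : 1 + i - 1 = i := by omega
      have h2 : q - (1 + i) + 1 = q - i := by omega
      have h3 : 1 + i = i + 1 := by omega
      rw [h1, h2, h3]
      ring
    rw [hEq, ← Finset.Ico_add_one_right_eq_Icc, Finset.sum_Ico_eq_sum_range, Finset.sum_congr rfl hterm, neg_mul,
      Finset.sum_mul, ← Finset.sum_neg_distrib]
    exact Finset.sum_congr rfl fun i _ => by ring
end

section
/- Let c, b, w ∈ ℂ with c ≠ 0 and let P be a polynomial over ℂ. Define f(z) = c + b·e^{wz}, A(z) = (b/c)·P(z) - w + P(z)·e^{-wz}, and B(z) = -(wb/c)·P(z). Then f''(z) + A(z)·f'(z) + B(z)·f(z) = 0 for all z ∈ ℂ. -/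
open Complex Polynomial

theorem stmt_19 (c b w : ℂ) (hc : c ≠ 0) (P : Polynomial ℂ) (f A B : ℂ → ℂ)
    (hf : f = fun z => c + b * Complex.exp (w * z))
    (hA : A = fun z => (b / c) * P.eval z - w + P.eval z * Complex.exp (-(w * z)))
    (hB : B = fun z => -(w * b / c) * P.eval z) :
    ∀ z : ℂ, iteratedDeriv 2 f z + A z * deriv f z + B z * f z = 0 := by
  have hd : deriv f = fun z => b * w * Complex.exp (w * z) := by
    funext z
    subst hf
    have h1 : HasDerivAt (fun z : ℂ => w * z) w z := by
      simpa using (hasDerivAt_id z).const_mul w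
    have h2 : HasDerivAt (fun z : ℂ => c + b * Complex.exp (w * z))
        (b * (Complex.exp (w * z) * w)) z :=
      (((h1.cexp).const_mul b).const_add c)
    rw [h2.deriv]; ring
  have hd2 : ∀ z, iteratedDeriv 2 f z = b * w * w * Complex.exp (w * z) := by
    intro z
    rw [iteratedDeriv_succ, iteratedDeriv_one, hd]
    have h1 : HasDerivAt (fun z : ℂ => w * z) w z := by
      simpa using (hasDerivAt_id z).const_mul w
    have h2 : HasDerivAt (fun z : ℂ => b * w * Complex.exp (w * z))
        (b * w * (Complex.exp (w * z) * w)) z := (h1.cexp).const_mul (b * w)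
    rw [h2.deriv]; ring
  intro z
  rw [hd2, hd, hA, hB, hf]
  simp only
  have he : Complex.exp (-(w * z)) * Complex.exp (w * z) = 1 := by
    rw [← Complex.exp_add]; simp
  linear_combination b * w * P.eval z * he - b * w * P.eval z * mul_inv_cancel₀ hc
end
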